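/- arXiv:1805.11748 — 12 statements merged into one kernel-verified Lean document; each statement's English description precedes it below -/
import Mathlib

section
/- Let M be an m × n binary (d, r; z]-disjunct matrix with z ≥ 1, r ≥ 1 and d + r ≤ n, and let D be a set of column indices with |D| ≤ d. Let y ∈ {0,1}^m be the entrywise OR of the columns of M indexed by D, and let D̂ = { j : the support of column j of M is contained in the support of y }. Then D ⊆ D̂ and |D̂| ≤ |D| + r − 1. -/
/-- An `m × n` binary matrix `M` is `(d, r; z]`-disjunct if for every pair of disjoint
sets `S1`, `S2` of column indices with `|S1| = d` and `|S2| = r`, there are at least `z`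
rows in which every column indexed by `S2` has entry 1 and every column indexed by `S1`
has entry 0. -/
def Disjunct (m n d r z : ℕ) (M : Fin m → Fin n → Bool) : Prop :=
  ∀ S1 S2 : Finset (Fin n), Disjoint S1 S2 → S1.card = d → S2.card = r →
    z ≤ (Finset.univ.filter fun i : Fin m =>
      (∀ j ∈ S2, M i j = true) ∧ ∀ j ∈ S1, M i j = false).card

/-- correctness of naive decoding for a `(d, r; z]`-disjunct matrix:
with `y` the entrywise OR of the columns indexed by `D`, the set `Dhat` of columns whose
support is contained in the support of `y` contains `D` and has at most `|D| + r - 1`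
elements. -/
theorem naive_decoding (m n d r z : ℕ) (hr : 1 ≤ r) (hz : 1 ≤ z) (hn : d + r ≤ n)
    (M : Fin m → Fin n → Bool) (hM : Disjunct m n d r z M)
    (D : Finset (Fin n)) (hD : D.card ≤ d)
    (y : Fin m → Bool) (hy : ∀ i, y i = true ↔ ∃ j ∈ D, M i j = true)
    (Dhat : Finset (Fin n))
    (hDhat : Dhat = Finset.univ.filter fun j => ∀ i, M i j = true → y i = true) :
    D ⊆ Dhat ∧ Dhat.card ≤ D.card + r - 1 := by
  have hsub : D ⊆ Dhat := by
    intro j hj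
    rw [hDhat, Finset.mem_filter]
    exact ⟨Finset.mem_univ j, fun i hij => (hy i).2 ⟨j, hj, hij⟩⟩
  refine ⟨hsub, ?_⟩
  by_contra hcard
  push_neg at hcard
  -- Dhat \ D has at least r elements
  have hdiff : r ≤ (Dhat \ D).card := by
    have := Finset.card_sdiff_add_card_eq_card hsub
    omega
  obtain ⟨S2, hS2sub, hS2card⟩ := Finset.exists_subset_card_eq hdiff
  -- extend D to S1 of size d within univ \ S2
  have hDsub : D ⊆ Finset.univ \ S2 := by
    intro j hj
    simp only [Finset.mem_sdiff, Finset.mem_univ, true_and]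
    intro hjS2
    exact (Finset.mem_sdiff.1 (hS2sub hjS2)).2 hj
  have hucard : d ≤ (Finset.univ \ S2 : Finset (Fin n)).card := by
    rw [Finset.card_sdiff_of_subset (Finset.subset_univ _), Finset.card_univ, Fintype.card_fin, hS2card]
    omega
  obtain ⟨S1, hDS1, hS1sub, hS1card⟩ := Finset.exists_subsuperset_card_eq hDsub hD hucard
  have hdisj : Disjoint S1 S2 := by
    rw [Finset.disjoint_left]
    intro a haS1 haS2
    exact (Finset.mem_sdiff.1 (hS1sub haS1)).2 haS2
  have := hM S1 S2 hdisj hS1card hS2card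
  have hne : (Finset.univ.filter fun i : Fin m =>
      (∀ j ∈ S2, M i j = true) ∧ ∀ j ∈ S1, M i j = false).Nonempty := by
    rw [← Finset.card_pos]; omega
  obtain ⟨i, hi⟩ := hne
  rw [Finset.mem_filter] at hi
  obtain ⟨-, h2, h1⟩ := hi
  -- y i = false
  have hyi : y i ≠ true := by
    intro h
    obtain ⟨j, hjD, hjM⟩ := (hy i).1 h
    rw [h1 j (hDS1 hjD)] at hjM
    exact Bool.false_ne_true hjM
  -- S2 is nonempty; pick j ∈ S2 ⊆ Dhat
  obtain ⟨j, hjS2⟩ := Finset.card_pos.1 (by omega : 0 < S2.card)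
  have hjDhat : j ∈ Dhat := (Finset.mem_sdiff.1 (hS2sub hjS2)).1
  rw [hDhat, Finset.mem_filter] at hjDhat
  exact hyi (hjDhat.2 i (h2 j hjS2))
end

section
/- Let n = 2^k with k ≥ 1, let S be the 2k × n signature matrix, and let D be a nonempty set of column indices. Then the entrywise OR of the columns {S_j : j ∈ D} has weight at least k, with equality if and only if |D| = 1. -/
/-- The `2k × 2^k` signature matrix: the column indexed by `j` consists of the `k`-bit
binary representation of `j` followed by its bitwise complement. -/
def sig (k : ℕ) : Fin (2 * k) → Fin (2 ^ k) → Bool :=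
  fun l j => if (l : ℕ) < k then (j : ℕ).testBit l else !((j : ℕ).testBit ((l : ℕ) - k))

/-!
Split the rows into the bit rows `i` and the complemented rows `k + i`. Row `i` of the OR is set
iff some column of `D` has bit `i` set, row `k + i` iff some column has it clear; since `D` is
nonempty at least one of the two happens for each `i`, so the weight is `k` plus the number of bit
positions on which the columns of `D` disagree. Distinct columns differ in some bit below `k`, so
this number vanishes exactly when `D` is a singleton.
-/

open Finset Function

lemma card_filter_fin_two_mul {k : ℕ} (p : Fin (2 * k) → Prop) [DecidablePred p] :
    #{l | p l} = #{i : Fin k | p (Fin.cast (two_mul k).symm (Fin.castAdd k i))} +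
      #{i : Fin k | p (Fin.cast (two_mul k).symm (Fin.natAdd k i))} := by
  simp only [card_filter]
  rw [← (finCongr (two_mul k).symm).sum_comp, Fin.sum_univ_add]
  rfl

lemma sig_castAdd {k : ℕ} (i : Fin k) (j : Fin (2 ^ k)) :
    sig k (Fin.cast (two_mul k).symm (Fin.castAdd k i)) j = (j : ℕ).testBit i := by
  simp [sig]

lemma sig_natAdd {k : ℕ} (i : Fin k) (j : Fin (2 ^ k)) :
    sig k (Fin.cast (two_mul k).symm (Fin.natAdd k i)) j = !(j : ℕ).testBit i := by
  simp [sig]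

lemma card_filter_exists_sig {k : ℕ} (D : Finset (Fin (2 ^ k))) :
    #{l | ∃ j ∈ D, sig k l j = true} =
      #{i : Fin k | ∃ j ∈ D, (j : ℕ).testBit i = true} +
        #{i : Fin k | ∃ j ∈ D, (j : ℕ).testBit i = false} := by
  simp only [card_filter_fin_two_mul, sig_castAdd, sig_natAdd, Bool.not_eq_true']

lemma injective_testBit_fin_two_pow (k : ℕ) :
    Injective fun (j : Fin (2 ^ k)) (i : Fin k) => (j : ℕ).testBit i := by
  intro a b hab
  ext
  refine Nat.eq_of_testBit_eq fun i => ?_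
  by_cases hi : i < k
  · exact congrFun hab ⟨i, hi⟩
  · have hk : 2 ^ k ≤ 2 ^ i := Nat.pow_le_pow_right two_pos (not_lt.mp hi)
    rw [Nat.testBit_lt_two_pow (a.isLt.trans_le hk), Nat.testBit_lt_two_pow (b.isLt.trans_le hk)]

section Separating

variable {α ι : Type*} [Fintype ι] {D : Finset α} (f : α → ι → Bool)

lemma card_filter_exists_add_card_filter_exists_not (hD : D.Nonempty) :
    #{i | ∃ j ∈ D, f j i = true} + #{i | ∃ j ∈ D, f j i = false} =
      Fintype.card ι + #{i | (∃ j ∈ D, f j i = true) ∧ ∃ j ∈ D, f j i = false} := by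
  classical
  have hunion : ({i | (∃ j ∈ D, f j i = true) ∨ ∃ j ∈ D, f j i = false} : Finset ι) = univ := by
    obtain ⟨j, hj⟩ := hD
    refine eq_univ_of_forall fun i => mem_filter.mpr ⟨mem_univ i, ?_⟩
    cases h : f j i
    exacts [Or.inr ⟨j, hj, h⟩, Or.inl ⟨j, hj, h⟩]
  rw [filter_and, ← card_union_add_card_inter, ← filter_or, hunion, card_univ]

lemma filter_separated_eq_empty_iff (hf : Injective f) (hD : D.Nonempty) :
    ({i | (∃ j ∈ D, f j i = true) ∧ ∃ j ∈ D, f j i = false} : Finset ι) = ∅ ↔ #D = 1 := by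
  have hcard : #D = 1 ↔ ∀ a ∈ D, ∀ b ∈ D, a = b := by
    rw [← card_le_one]
    have := hD.card_pos
    omega
  rw [hcard, filter_eq_empty_iff]
  constructor
  · intro hsep a ha b hb
    refine hf (funext fun i => ?_)
    by_contra hne
    refine hsep (mem_univ i) ?_
    cases hai : f a i
    · exact ⟨⟨b, hb, by simpa [hai] using Ne.symm hne⟩, a, ha, hai⟩
    · exact ⟨⟨a, ha, hai⟩, b, hb, by simpa [hai] using Ne.symm hne⟩
  · rintro hD i - ⟨⟨a, ha, hai⟩, b, hb, hbi⟩
    rw [hD a ha b hb, hbi] at hai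
    exact Bool.false_ne_true hai

lemma card_le_card_filter_exists_add_card_filter_exists_not (hf : Injective f) (hD : D.Nonempty) :
    Fintype.card ι ≤ #{i | ∃ j ∈ D, f j i = true} + #{i | ∃ j ∈ D, f j i = false} ∧
      (#{i | ∃ j ∈ D, f j i = true} + #{i | ∃ j ∈ D, f j i = false} = Fintype.card ι ↔
        #D = 1) := by
  rw [card_filter_exists_add_card_filter_exists_not f hD, ← filter_separated_eq_empty_iff f hf hD,
    ← card_eq_zero]
  omega

end Separating

theorem sig_or_weight_general (k : ℕ) (D : Finset (Fin (2 ^ k))) (hD : D.Nonempty)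
    (o : Fin (2 * k) → Bool) (ho : ∀ l, o l = true ↔ ∃ j ∈ D, sig k l j = true) :
    k ≤ (Finset.univ.filter fun l => o l = true).card ∧
      ((Finset.univ.filter fun l => o l = true).card = k ↔ D.card = 1) := by
  rw [filter_congr fun l _ => ho l, card_filter_exists_sig]
  -- `convert` rather than `exact`: over `Fin (2 ^ k)` the existentials in the goal are decided
  -- by `Nat.decidableExistsFin`, not by the generic instance of the lemma.
  convert card_le_card_filter_exists_add_card_filter_exists_not _
    (injective_testBit_fin_two_pow k) hD <;> exact (Fintype.card_fin k).symm

/-- for a nonempty set `D` of column indices, the entrywise OR `o` of the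
columns of the signature matrix indexed by `D` has weight at least `k`, with equality
if and only if `|D| = 1`. -/
theorem sig_or_weight (k : ℕ) (hk : 1 ≤ k) (D : Finset (Fin (2 ^ k))) (hD : D.Nonempty)
    (o : Fin (2 * k) → Bool) (ho : ∀ l, o l = true ↔ ∃ j ∈ D, sig k l j = true) :
    k ≤ (Finset.univ.filter fun l => o l = true).card ∧
      ((Finset.univ.filter fun l => o l = true).card = k ↔ D.card = 1) :=
  sig_or_weight_general k D hD o ho
end

section
/- Let n = 2^k with k ≥ 1, let S be the 2k × n signature matrix, and let D be a nonempty set of column indices. If the entrywise OR of the columns {S_j : j ∈ D} equals the single column S_a for some index a, then D = {a}. -/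
/-- if the entrywise OR of the columns of the signature matrix indexed by
a nonempty set `D` equals the single column `S_a`, then `D = {a}`. -/
theorem sig_or_eq_single (k : ℕ) (hk : 1 ≤ k) (D : Finset (Fin (2 ^ k))) (hD : D.Nonempty)
    (a : Fin (2 ^ k))
    (h : ∀ l, ((∃ j ∈ D, sig k l j = true) ↔ sig k l a = true)) :
    D = {a} := by
  have key : ∀ j ∈ D, j = a := by
    intro j hj
    apply Fin.ext
    apply Nat.eq_of_testBit_eq
    intro i
    by_cases hi : i < k
    · have h1 := (h ⟨i, by omega⟩).mp
      have h2 := (h ⟨i + k, by omega⟩).mp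
      have hik : ¬ (i + k < k) := by omega
      simp only [sig, hi, if_true, hik, if_false, Nat.add_sub_cancel] at h1 h2
      cases hjb : (j : ℕ).testBit i
      · have := h2 ⟨j, hj, by simp [hjb]⟩
        simpa using this.symm
      · exact (h1 ⟨j, hj, hjb⟩).symm
    · have hj2 : (j : ℕ) < 2 ^ i := lt_of_lt_of_le j.isLt (Nat.pow_le_pow_right (by norm_num) (by omega))
      have ha2 : (a : ℕ) < 2 ^ i := lt_of_lt_of_le a.isLt (Nat.pow_le_pow_right (by norm_num) (by omega))
      rw [Nat.testBit_eq_false_of_lt hj2, Nat.testBit_eq_false_of_lt ha2]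
  obtain ⟨b, hb⟩ := hD
  apply Finset.eq_singleton_iff_unique_mem.mpr
  exact ⟨key b hb ▸ hb, key⟩
end

section
/- Let n = 2^k with k ≥ 1, let d ≥ 1 with d ≤ n, let M be an m × n binary (d − 1, 1; 1]-disjunct matrix, and let S be the 2k × n signature matrix. Then for every nonempty set D of column indices with |D| ≤ d, one has D = { a : there exists a row i of M such that the entrywise OR of the columns { S_j : j ∈ D and M(i, j) = 1 } equals S_a }, where the OR over the empty set is the all-zero vector. In other words, the tensor-product measurement matrix M ⊙ S identifies any set of at most d defective items exactly. -/
/-- with `M` a `(d - 1, 1; 1]`-disjunct matrix and `S` the signature matrix,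
the tensor-product measurement matrix `M ⊙ S` identifies any nonempty set `D` of at most
`d` defective columns exactly: `D` equals the set of indices `a` such that for some row
`i` of `M`, the entrywise OR of the columns `{S_j : j ∈ D, M(i,j) = 1}` equals `S_a`
(the OR over the empty set being the all-zero vector). -/
theorem tensor_identifies_defectives (k m d : ℕ) (hk : 1 ≤ k) (hd : 1 ≤ d)
    (hdn : d ≤ 2 ^ k)
    (M : Fin m → Fin (2 ^ k) → Bool) (hM : Disjunct m (2 ^ k) (d - 1) 1 1 M)
    (D : Finset (Fin (2 ^ k))) (hD : D.Nonempty) (hDd : D.card ≤ d) :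
    D = Finset.univ.filter fun a : Fin (2 ^ k) =>
      ∃ i : Fin m, ∀ l : Fin (2 * k),
        ((∃ j ∈ D, M i j = true ∧ sig k l j = true) ↔ sig k l a = true) := by
  ext a
  simp only [Finset.mem_filter, Finset.mem_univ, true_and]
  constructor
  · intro ha
    -- find a superset S1 of D.erase a of size d-1 avoiding a
    have hsub : D.erase a ⊆ Finset.univ.erase a := fun x hx =>
      Finset.mem_erase.mpr ⟨(Finset.mem_erase.mp hx).1, Finset.mem_univ x⟩
    have hcard1 : (D.erase a).card ≤ d - 1 := by
      have := Finset.card_erase_of_mem ha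
      omega
    have hcard2 : d - 1 ≤ (Finset.univ.erase a : Finset (Fin (2 ^ k))).card := by
      rw [Finset.card_erase_of_mem (Finset.mem_univ a), Finset.card_univ,
        Fintype.card_fin]
      omega
    obtain ⟨S1, hS1sub, hS1univ, hS1card⟩ :=
      Finset.exists_subsuperset_card_eq hsub hcard1 hcard2
    have haS1 : a ∉ S1 := fun h => (Finset.mem_erase.mp (hS1univ h)).1 rfl
    have hdisj : Disjoint S1 ({a} : Finset (Fin (2 ^ k))) := by
      simp [Finset.disjoint_singleton_right, haS1]
    have := hM S1 {a} hdisj hS1card (Finset.card_singleton a)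
    have hne : (Finset.univ.filter fun i : Fin m =>
        (∀ j ∈ ({a} : Finset (Fin (2 ^ k))), M i j = true) ∧
          ∀ j ∈ S1, M i j = false).Nonempty := by
      rw [← Finset.card_pos]; omega
    obtain ⟨i, hi⟩ := hne
    simp only [Finset.mem_filter, Finset.mem_singleton] at hi
    obtain ⟨-, hMa, hS1false⟩ := hi
    refine ⟨i, fun l => ⟨?_, fun hl => ⟨a, ha, hMa a rfl, hl⟩⟩⟩
    rintro ⟨j, hjD, hjM, hjs⟩
    have : j = a := by
      by_contra hne
      have : j ∈ S1 := hS1sub (Finset.mem_erase.mpr ⟨hne, hjD⟩)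
      rw [hS1false j this] at hjM; exact absurd hjM (by simp)
    subst this; exact hjs
  · rintro ⟨i, hi⟩
    -- first, find some j0 ∈ D with M i j0 = true and the iff
    have hex : ∃ j0 ∈ D, M i j0 = true := by
      by_cases h0 : (a : ℕ).testBit 0 = true
      · obtain ⟨j, hj, hjM, -⟩ := (hi ⟨0, by omega⟩).mpr
          (by simp [sig, show (0:ℕ) < k from hk, h0])
        exact ⟨j, hj, hjM⟩
      · obtain ⟨j, hj, hjM, -⟩ := (hi ⟨k, by omega⟩).mpr
          (by simp only [sig, lt_irrefl, if_false, Nat.sub_self]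
              simp [Bool.not_eq_true] at h0 ⊢; exact h0)
        exact ⟨j, hj, hjM⟩
    obtain ⟨j0, hj0D, hj0M⟩ := hex
    -- show a = j0
    have hbit : ∀ b, (a : ℕ).testBit b = (j0 : ℕ).testBit b := by
      intro b
      by_cases hb : b < k
      · by_cases hj0b : (j0 : ℕ).testBit b = true
        · have := (hi ⟨b, by omega⟩).mp ⟨j0, hj0D, hj0M, by simp [sig, hb, hj0b]⟩
          simp only [sig, hb, if_true] at this
          rw [this, hj0b]
        · have hj0b' : (j0 : ℕ).testBit b = false := by
            simpa [Bool.not_eq_true] using hj0b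
          have := (hi ⟨b + k, by omega⟩).mp
            ⟨j0, hj0D, hj0M, by simp [sig, hj0b']⟩
          simp only [sig, Nat.add_sub_cancel] at this
          rw [if_neg (by omega)] at this
          simp only [Bool.not_eq_true'] at this
          rw [this, hj0b']
      · have h1 : (a : ℕ).testBit b = false :=
          Nat.testBit_eq_false_of_lt (lt_of_lt_of_le a.isLt
            (Nat.pow_le_pow_right (by norm_num) (by omega)))
        have h2 : (j0 : ℕ).testBit b = false :=
          Nat.testBit_eq_false_of_lt (lt_of_lt_of_le j0.isLt
            (Nat.pow_le_pow_right (by norm_num) (by omega)))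
        rw [h1, h2]
    have : a = j0 := Fin.ext (Nat.eq_of_testBit_eq hbit)
    rw [this]; exact hj0D
end

section
/- Let n = 2^k with k ≥ 1, let e ≥ 0, d ≥ 1, h ≥ 0 be integers with d + h + 1 ≤ n, let M be an m × n binary (d + h, 1; 2e + 1]-disjunct matrix, and let S be the 2k × n signature matrix. Let D and H be disjoint sets of column indices with 1 ≤ |D| ≤ d and |H| ≤ h, and for each row i of M define the block y_i ∈ {0,1}^{2k} by (y_i)_l = 1 if and only if there exists j ∈ D with M(i, j) = 1 and S(l, j) = 1, and there is no j ∈ H with M(i, j) = 1 and S(l, j) = 1. Suppose ŷ = (ŷ_1, …, ŷ_m) differs from y = (y_1, …, y_m) in at most e of the 2km coordinates. Then for every j ∈ D, the number of rows i with ŷ_i = S_j is at least e + 1. -/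
/-- with `M` a `(d + h, 1; 2e + 1]`-disjunct matrix, `S` the signature
matrix, `D` the defectives, `H` the inhibitors, `y` the GTI outcome blocks of `M ⊙ S`,
and `yhat` differing from `y` in at most `e` coordinates, every defective `j ∈ D` has at
least `e + 1` rows `i` with `yhat_i = S_j`. -/
theorem defective_blocks_survive_errors (k m e d h : ℕ) (hk : 1 ≤ k) (hd : 1 ≤ d)
    (hn : d + h + 1 ≤ 2 ^ k)
    (M : Fin m → Fin (2 ^ k) → Bool) (hM : Disjunct m (2 ^ k) (d + h) 1 (2 * e + 1) M)
    (D H : Finset (Fin (2 ^ k))) (hDH : Disjoint D H)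
    (hD1 : 1 ≤ D.card) (hDd : D.card ≤ d) (hHh : H.card ≤ h)
    (y yhat : Fin m → Fin (2 * k) → Bool)
    (hy : ∀ i l, y i l = true ↔
      (∃ j ∈ D, M i j = true ∧ sig k l j = true) ∧
        ¬∃ j ∈ H, M i j = true ∧ sig k l j = true)
    (herr : (Finset.univ.filter fun p : Fin m × Fin (2 * k) =>
      yhat p.1 p.2 ≠ y p.1 p.2).card ≤ e) :
    ∀ j ∈ D, e + 1 ≤ (Finset.univ.filter fun i : Fin m =>
      ∀ l, yhat i l = sig k l j).card := by
  intro j hjD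
  classical
  -- build S1 ⊇ (D ∪ H).erase j of size d + h inside univ.erase j
  have hTsub : (D ∪ H).erase j ⊆ Finset.univ.erase j := fun x hx =>
    Finset.mem_erase.2 ⟨(Finset.mem_erase.1 hx).1, Finset.mem_univ x⟩
  have hcardU : (D ∪ H).card ≤ d + h := by
    rw [Finset.card_union_of_disjoint hDH]; omega
  have hTcard : ((D ∪ H).erase j).card ≤ d + h := by
    calc ((D ∪ H).erase j).card ≤ (D ∪ H).card := Finset.card_erase_le
    _ ≤ d + h := hcardU
  have hUcard : d + h ≤ (Finset.univ.erase j).card := by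
    rw [Finset.card_erase_of_mem (Finset.mem_univ j), Finset.card_univ, Fintype.card_fin]
    omega
  obtain ⟨S1, hTS1, hS1U, hS1card⟩ :=
    Finset.exists_subsuperset_card_eq hTsub hTcard hUcard
  have hjS1 : j ∉ S1 := fun hc => (Finset.mem_erase.1 (hS1U hc)).1 rfl
  have hdisj : Disjoint S1 ({j} : Finset (Fin (2 ^ k))) := by
    simp [Finset.disjoint_singleton_right, hjS1]
  have hG := hM S1 {j} hdisj hS1card (Finset.card_singleton j)
  set G := Finset.univ.filter fun i : Fin m =>
      (∀ j' ∈ ({j} : Finset (Fin (2 ^ k))), M i j' = true) ∧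
        ∀ j' ∈ S1, M i j' = false with hGdef
  -- rows with some error
  set E := Finset.univ.filter fun p : Fin m × Fin (2 * k) => yhat p.1 p.2 ≠ y p.1 p.2 with hEdef
  set B := E.image Prod.fst with hBdef
  have hBcard : B.card ≤ e := le_trans Finset.card_image_le herr
  -- for rows in G, y i = sig column j
  have hGy : ∀ i ∈ G, ∀ l, y i l = sig k l j := by
    intro i hi l
    have hi' := Finset.mem_filter.1 hi
    have hMij : M i j = true := hi'.2.1 j (Finset.mem_singleton_self j)
    have hS1zero : ∀ j' ∈ S1, M i j' = false := hi'.2.2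
    have hother : ∀ j', j' ≠ j → j' ∈ D ∪ H → M i j' = false := by
      intro j' hne hmem
      exact hS1zero j' (hTS1 (Finset.mem_erase.2 ⟨hne, hmem⟩))
    by_cases hs : sig k l j = true
    · rw [hs]
      rw [hy i l]
      constructor
      · exact ⟨j, hjD, hMij, hs⟩
      · rintro ⟨j', hj'H, hMj', _⟩
        have hne : j' ≠ j := fun hc => (Finset.disjoint_right.1 hDH hj'H) (hc ▸ hjD)
        have := hother j' hne (Finset.mem_union_right D hj'H)
        simp_all
    · have hs' : sig k l j = false := by simpa using hs
      rw [hs']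
      by_contra hc
      have hyt : y i l = true := by simpa using hc
      obtain ⟨⟨j', hj'D, hMj', hsj'⟩, _⟩ := (hy i l).1 hyt
      by_cases hne : j' = j
      · subst hne; exact hs hsj'
      · have := hother j' hne (Finset.mem_union_left H hj'D)
        simp_all
    -- good rows: in G, not in B
  have hsubset : G \ B ⊆ Finset.univ.filter fun i : Fin m => ∀ l, yhat i l = sig k l j := by
    intro i hi
    have hiG := (Finset.mem_sdiff.1 hi).1
    have hiB := (Finset.mem_sdiff.1 hi).2
    refine Finset.mem_filter.2 ⟨Finset.mem_univ i, fun l => ?_⟩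
    have hno : yhat i l = y i l := by
      by_contra hne
      exact hiB (Finset.mem_image.2 ⟨(i, l), Finset.mem_filter.2 ⟨Finset.mem_univ _, hne⟩, rfl⟩)
    rw [hno, hGy i hiG l]
  have hcard : 2 * e + 1 - e ≤ (G \ B).card := by
    have := Finset.le_card_sdiff B G
    omega
  calc e + 1 = 2 * e + 1 - e := by omega
  _ ≤ (G \ B).card := hcard
  _ ≤ _ := Finset.card_le_card hsubset
end

section
/- Let n = 2^k with k ≥ 1, let e ≥ 0, d ≥ 1, h ≥ 0 be integers with d + h + 1 ≤ n, let M be an m × n binary (d + h, 1; 2e + 1]-disjunct matrix, and let S be the 2k × n signature matrix. Let D and H be disjoint sets of column indices with 1 ≤ |D| ≤ d and |H| ≤ h, define the blocks y_i ∈ {0,1}^{2k} by (y_i)_l = 1 if and only if there exists j ∈ D with M(i, j) = 1 and S(l, j) = 1, and there is no j ∈ H with M(i, j) = 1 and S(l, j) = 1, and let ŷ differ from y in at most e of the 2km coordinates. Then for every index a ∉ D ∪ H, there are at least e + 1 rows i such that M(i, a) = 1 and (ŷ_i)_l = 0 for every l with S(l, a) = 1. In particular, every non-defective, non-inhibitor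 item fails the positivity check of the decoder. -/
/-- with `M` a `(d + h, 1; 2e + 1]`-disjunct matrix, `S` the signature
matrix, `y` the GTI outcome blocks of `M ⊙ S`, and `yhat` differing from `y` in at most
`e` coordinates, every index `a ∉ D ∪ H` has at least `e + 1` rows `i` with `M(i,a) = 1`
and `yhat_i` vanishing on the support of `S_a`; i.e., every non-defective,
non-inhibitor item fails the positivity check of the decoder. -/
theorem negative_items_fail_check (k m e d h : ℕ) (hk : 1 ≤ k) (hd : 1 ≤ d)
    (hn : d + h + 1 ≤ 2 ^ k)
    (M : Fin m → Fin (2 ^ k) → Bool) (hM : Disjunct m (2 ^ k) (d + h) 1 (2 * e + 1) M)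
    (D H : Finset (Fin (2 ^ k))) (hDH : Disjoint D H)
    (hD1 : 1 ≤ D.card) (hDd : D.card ≤ d) (hHh : H.card ≤ h)
    (y yhat : Fin m → Fin (2 * k) → Bool)
    (hy : ∀ i l, y i l = true ↔
      (∃ j ∈ D, M i j = true ∧ sig k l j = true) ∧
        ¬∃ j ∈ H, M i j = true ∧ sig k l j = true)
    (herr : (Finset.univ.filter fun p : Fin m × Fin (2 * k) =>
      yhat p.1 p.2 ≠ y p.1 p.2).card ≤ e) :
    ∀ a : Fin (2 ^ k), a ∉ D ∪ H →
      e + 1 ≤ (Finset.univ.filter fun i : Fin m =>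
        M i a = true ∧ ∀ l, sig k l a = true → yhat i l = false).card := by

  intro a ha
  have hcard : (D ∪ H).card ≤ d + h :=
    le_trans (Finset.card_union_le D H) (add_le_add hDd hHh)
  have hsub : D ∪ H ⊆ Finset.univ.erase a := by
    intro x hx
    exact Finset.mem_erase.mpr ⟨fun hxa => ha (hxa ▸ hx), Finset.mem_univ x⟩
  have hle : d + h ≤ (Finset.univ.erase a).card := by
    rw [Finset.card_erase_of_mem (Finset.mem_univ a), Finset.card_univ, Fintype.card_fin]
    omega
  obtain ⟨u, huDH, hua, hucard⟩ := Finset.exists_subsuperset_card_eq hsub hcard hle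
  have hdisj : Disjoint u {a} := by
    simp only [Finset.disjoint_singleton_right]
    intro hau
    exact (Finset.mem_erase.mp (hua hau)).1 rfl
  have hA := hM u {a} hdisj hucard (Finset.card_singleton a)
  set A := Finset.univ.filter fun i : Fin m =>
    (∀ j ∈ ({a} : Finset (Fin (2 ^ k))), M i j = true) ∧ ∀ j ∈ u, M i j = false with hAdef
  set E := Finset.univ.filter fun i : Fin m => ∃ l, yhat i l ≠ y i l with hEdef
  have hEcard : E.card ≤ e := by
    have himg : E ⊆ (Finset.univ.filter fun p : Fin m × Fin (2 * k) =>
        yhat p.1 p.2 ≠ y p.1 p.2).image Prod.fst := ?_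
    · exact le_trans (Finset.card_le_card himg) (le_trans Finset.card_image_le herr)
    intro i hi
    simp only [hEdef, Finset.mem_filter, Finset.mem_univ, true_and] at hi
    obtain ⟨l, hl⟩ := hi
    exact Finset.mem_image.mpr ⟨(i, l), by simp [hl], rfl⟩
  have hsub2 : A \ E ⊆ Finset.univ.filter fun i : Fin m =>
      M i a = true ∧ ∀ l, sig k l a = true → yhat i l = false := by
    intro i hi
    rw [Finset.mem_sdiff] at hi
    obtain ⟨hiA, hiE⟩ := hi
    simp only [hAdef, Finset.mem_filter, Finset.mem_univ, true_and,
      Finset.mem_singleton] at hiA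
    simp only [hEdef, Finset.mem_filter, Finset.mem_univ, true_and, not_exists] at hiE
    refine Finset.mem_filter.mpr ⟨Finset.mem_univ i, hiA.1 a rfl, fun l _ => ?_⟩
    have hyl : y i l = false := by
      rw [Bool.eq_false_iff]
      intro ht
      obtain ⟨⟨j, hjD, hjM, _⟩, _⟩ := (hy i l).mp ht
      have := hiA.2 j (huDH (Finset.mem_union_left _ hjD))
      simp [this] at hjM
    have hval : yhat i l = y i l := not_ne_iff.mp (hiE l)
    rw [hval, hyl]
  have h1 : A.card - E.card ≤ (A \ E).card := Finset.le_card_sdiff E A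
  have h2 := Finset.card_le_card hsub2
  omega
end

section
/- Let n = 2^k with k ≥ 1, let e ≥ 0, d ≥ 1, h ≥ 1 be integers with d + h ≤ n, let G be a g × n binary (d + h − 2, 2; 2e + 1]-disjunct matrix, and let S be the 2k × n signature matrix. Let D and H be disjoint sets of column indices with 1 ≤ |D| ≤ d and 1 ≤ |H| ≤ h, and define blocks h_i ∈ {0,1}^{2k} by (h_i)_l = 1 if and only if there exists j ∈ D with G(i, j) = 1 and S(l, j) = 1, and there is no j ∈ H with G(i, j) = 1 and S(l, j) = 1. Suppose ĥ differs from h = (h_1, …, h_g) in at most e of the 2kg coordinates. Then for every inhibitor j1 ∈ H and every defective j2 ∈ D, the number of rows i such that (ĥ_i)_l = S(l, j2)·(1 − S(l, j1)) for all l is at least e + 1. -/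
/-- with `G` a `(d + h - 2, 2; 2e + 1]`-disjunct matrix, `S` the signature
matrix, `hv` the GTI outcome blocks of `G ⊙ S`, and `hvhat` differing from `hv` in at
most `e` coordinates, for every inhibitor `j1 ∈ H` and defective `j2 ∈ D` there are at
least `e + 1` rows `i` with `hvhat_i` equal to `S_{j2}` masked by `S_{j1}`, i.e.
`(hvhat_i)_l = S(l, j2) · (1 - S(l, j1))` for all `l`. -/
theorem inhibitor_blocks_survive_errors (k g e d h : ℕ) (hk : 1 ≤ k)
    (hd : 1 ≤ d) (hh : 1 ≤ h) (hn : d + h ≤ 2 ^ k)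
    (G : Fin g → Fin (2 ^ k) → Bool)
    (hG : Disjunct g (2 ^ k) (d + h - 2) 2 (2 * e + 1) G)
    (D H : Finset (Fin (2 ^ k))) (hDH : Disjoint D H)
    (hD1 : 1 ≤ D.card) (hDd : D.card ≤ d) (hH1 : 1 ≤ H.card) (hHh : H.card ≤ h)
    (hv hvhat : Fin g → Fin (2 * k) → Bool)
    (hhv : ∀ i l, hv i l = true ↔
      (∃ j ∈ D, G i j = true ∧ sig k l j = true) ∧
        ¬∃ j ∈ H, G i j = true ∧ sig k l j = true)
    (herr : (Finset.univ.filter fun p : Fin g × Fin (2 * k) =>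
      hvhat p.1 p.2 ≠ hv p.1 p.2).card ≤ e) :
    ∀ j1 ∈ H, ∀ j2 ∈ D,
      e + 1 ≤ (Finset.univ.filter fun i : Fin g =>
        ∀ l, hvhat i l = (sig k l j2 && !(sig k l j1))).card := by
  intro j1 hj1 j2 hj2
  classical
  have hne : j1 ≠ j2 := fun hEq => Finset.disjoint_right.mp hDH hj1 (hEq ▸ hj2)
  have hpair2 : ({j1, j2} : Finset (Fin (2 ^ k))).card = 2 := by
    rw [Finset.card_insert_of_notMem (by simpa using hne), Finset.card_singleton]
  have hpairsub : ({j1, j2} : Finset (Fin (2 ^ k))) ⊆ D ∪ H := by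
    intro x hx
    rcases Finset.mem_insert.mp hx with rfl | hx
    · exact Finset.mem_union_right _ hj1
    · exact Finset.mem_union_left _ (Finset.mem_singleton.mp hx ▸ hj2)
  set s : Finset (Fin (2 ^ k)) := (D ∪ H) \ {j1, j2} with hs
  have hscard : s.card = (D ∪ H).card - 2 := by
    rw [hs, Finset.card_sdiff_of_subset hpairsub, hpair2]
  have hDHcard : (D ∪ H).card = D.card + H.card := Finset.card_union_of_disjoint hDH
  have hssub : s ⊆ Finset.univ \ {j1, j2} :=
    Finset.sdiff_subset_sdiff (Finset.subset_univ _) le_rfl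
  have huniv : (Finset.univ \ ({j1, j2} : Finset (Fin (2 ^ k)))).card = 2 ^ k - 2 := by
    rw [Finset.card_sdiff_of_subset (Finset.subset_univ _), hpair2, Finset.card_univ, Fintype.card_fin]
  obtain ⟨u, hsu, husub, hucard⟩ :=
    Finset.exists_subsuperset_card_eq hssub
      (by omega : s.card ≤ d + h - 2) (by omega : d + h - 2 ≤ _)
  have hdisj : Disjoint u ({j1, j2} : Finset (Fin (2 ^ k))) := by
    rw [Finset.disjoint_right]
    intro x hx hxu
    exact (Finset.mem_sdiff.mp (husub hxu)).2 hx
  have hA := hG u {j1, j2} hdisj hucard hpair2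
  set A : Finset (Fin g) := Finset.univ.filter fun i =>
    (∀ j ∈ ({j1, j2} : Finset (Fin (2 ^ k))), G i j = true) ∧ ∀ j ∈ u, G i j = false with hAdef
  have key : ∀ i ∈ A, ∀ l, hv i l = (sig k l j2 && !(sig k l j1)) := by
    intro i hi l
    obtain ⟨-, hpos, hneg⟩ := Finset.mem_filter.mp hi
    have hGj1 : G i j1 = true := hpos j1 (by simp)
    have hGj2 : G i j2 = true := hpos j2 (by simp)
    have hGz : ∀ j ∈ D ∪ H, j ≠ j1 → j ≠ j2 → G i j = false := by
      intro j hj h1 h2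
      exact hneg j (hsu (Finset.mem_sdiff.mpr ⟨hj, by simp [h1, h2]⟩))
    rw [Bool.eq_iff_iff, hhv i l]
    simp only [Bool.and_eq_true, Bool.not_eq_true']
    constructor
    · rintro ⟨⟨j, hjD, hGj, hsj⟩, hnH⟩
      have hj2' : j = j2 := by
        by_contra hne'
        have hjne1 : j ≠ j1 := fun hEq => Finset.disjoint_right.mp hDH hj1 (hEq ▸ hjD)
        rw [hGz j (Finset.mem_union_left _ hjD) hjne1 hne'] at hGj
        exact absurd hGj (by simp)
      subst hj2'
      refine ⟨hsj, ?_⟩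
      by_contra hs1
      exact hnH ⟨j1, hj1, hGj1, by simpa using Bool.not_eq_false _ |>.mp hs1⟩
    · rintro ⟨hs2, hs1⟩
      refine ⟨⟨j2, hj2, hGj2, hs2⟩, ?_⟩
      rintro ⟨j, hjH, hGj, hsj⟩
      have hj1' : j = j1 := by
        by_contra hne'
        have hjne2 : j ≠ j2 := fun hEq => Finset.disjoint_left.mp hDH (hEq ▸ hj2) hjH
        rw [hGz j (Finset.mem_union_right _ hjH) hne' hjne2] at hGj
        exact absurd hGj (by simp)
      subst hj1'
      rw [hs1] at hsj
      exact absurd hsj (by simp)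
  set E : Finset (Fin g × Fin (2 * k)) :=
    Finset.univ.filter fun p => hvhat p.1 p.2 ≠ hv p.1 p.2 with hEdef
  set B : Finset (Fin g) := Finset.univ.filter (fun i => ∃ l, hvhat i l ≠ hv i l) with hBdef
  have hB : B.card ≤ e := by
    refine le_trans (le_trans (Finset.card_le_card ?_) (Finset.card_image_le (f := Prod.fst))) herr
    intro i hi
    obtain ⟨-, l, hl⟩ := Finset.mem_filter.mp hi
    exact Finset.mem_image.mpr ⟨(i, l), Finset.mem_filter.mpr ⟨Finset.mem_univ _, hl⟩, rfl⟩
  have hsub2 : A \ B ⊆ Finset.univ.filter fun i : Fin g =>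
      ∀ l, hvhat i l = (sig k l j2 && !(sig k l j1)) := by
    intro i hi
    obtain ⟨hiA, hiB⟩ := Finset.mem_sdiff.mp hi
    refine Finset.mem_filter.mpr ⟨Finset.mem_univ _, fun l => ?_⟩
    have heq : hvhat i l = hv i l := by
      by_contra hc
      exact hiB (Finset.mem_filter.mpr ⟨Finset.mem_univ _, l, hc⟩)
    rw [heq, key i hiA l]
  calc e + 1 ≤ A.card - B.card := by omega
    _ ≤ (A \ B).card := Finset.le_card_sdiff B A
    _ ≤ _ := Finset.card_le_card hsub2
end

section
/- Let e ≥ 0, d ≥ 1, h ≥ 0 be integers with d + h + 1 ≤ n, let G be a g × n binary (d + h − 1, 2; 2e + 1]-disjunct matrix, and let D and H be disjoint sets of column indices with 1 ≤ |D| ≤ d and |H| ≤ h. Define the GTI outcome vector g ∈ {0,1}^g by g_i = 1 if and only if there exists j ∈ D with G(i, j) = 1 and G(i, j') = 0 for every j' ∈ H, and let ĝ differ from g in at most e coordinates. Then: (a) for every x ∉ D ∪ H and every y ∈ D, there exists a row i with G(i, x) = G(i, y) = 1 and ĝ_i = 1; and (b) for every x ∈ H, the number of rows i with G(i, x) = 1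 and ĝ_i = 1 is at most e. In particular, the false-inhibitor removal test eliminates every item that is neither defective nor an inhibitor, while no true inhibitor triggers it more than e times. -/
/-- with `G` a `(d + h - 1, 2; 2e + 1]`-disjunct matrix, `gv` the GTI
outcome vector, and `ghat` differing from `gv` in at most `e` coordinates:
(a) every `x ∉ D ∪ H` has, for each defective `y ∈ D`, a row `i` with
`G(i,x) = G(i,y) = 1` and `ghat_i = 1` (the false-inhibitor removal test eliminates it);
(b) every true inhibitor `x ∈ H` has at most `e` rows `i` with `G(i,x) = 1` and
`ghat_i = 1`. -/
theorem false_inhibitor_removal (n g e d h : ℕ) (hd : 1 ≤ d) (hn : d + h + 1 ≤ n)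
    (G : Fin g → Fin n → Bool) (hG : Disjunct g n (d + h - 1) 2 (2 * e + 1) G)
    (D H : Finset (Fin n)) (hDH : Disjoint D H)
    (hD1 : 1 ≤ D.card) (hDd : D.card ≤ d) (hHh : H.card ≤ h)
    (gv ghat : Fin g → Bool)
    (hgv : ∀ i, gv i = true ↔
      (∃ j ∈ D, G i j = true) ∧ ∀ j' ∈ H, G i j' = false)
    (herr : (Finset.univ.filter fun i : Fin g => ghat i ≠ gv i).card ≤ e) :
    (∀ x : Fin n, x ∉ D ∪ H → ∀ y ∈ D,
      ∃ i : Fin g, G i x = true ∧ G i y = true ∧ ghat i = true) ∧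
    (∀ x ∈ H,
      (Finset.univ.filter fun i : Fin g => G i x = true ∧ ghat i = true).card ≤ e) := by
  constructor
  · intro x hx y hy
    have hxD : x ∉ D := fun hxD => hx (Finset.mem_union_left _ hxD)
    have hxH : x ∉ H := fun hxH => hx (Finset.mem_union_right _ hxH)
    have hxy : x ≠ y := fun hxy => hxD (hxy ▸ hy)
    have hyH : y ∉ H := Finset.disjoint_left.mp hDH hy
    set base := (D.erase y) ∪ H with hbase
    have hbt : base ⊆ Finset.univ \ {x, y} := by
      intro j hj
      simp only [Finset.mem_sdiff, Finset.mem_univ, true_and, Finset.mem_insert,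
        Finset.mem_singleton]
      rintro (rfl | rfl)
      · rcases Finset.mem_union.mp hj with h1 | h1
        · exact hxD (Finset.mem_of_mem_erase h1)
        · exact hxH h1
      · rcases Finset.mem_union.mp hj with h1 | h1
        · exact (Finset.notMem_erase _ _) h1
        · exact hyH h1
    have hbc : base.card ≤ d + h - 1 := by
      have h1 : base.card ≤ (D.erase y).card + H.card := Finset.card_union_le _ _
      have h2 : (D.erase y).card = D.card - 1 := Finset.card_erase_of_mem hy
      omega
    have htc : d + h - 1 ≤ (Finset.univ \ ({x, y} : Finset (Fin n))).card := by
      have h1 : ({x, y} : Finset (Fin n)).card = 2 := Finset.card_pair hxy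
      have h2 : (Finset.univ \ ({x, y} : Finset (Fin n))).card =
          (Finset.univ : Finset (Fin n)).card - 2 := by
        rw [Finset.card_sdiff_of_subset (Finset.subset_univ _), h1]
      simp only [Finset.card_univ, Fintype.card_fin] at h2
      omega
    obtain ⟨S1, hbS1, hS1t, hS1c⟩ := Finset.exists_subsuperset_card_eq hbt hbc htc
    have hdisj : Disjoint S1 ({x, y} : Finset (Fin n)) := by
      rw [Finset.disjoint_right]
      intro a ha haS1
      exact (Finset.mem_sdiff.mp (hS1t haS1)).2 ha
    have hS2c : ({x, y} : Finset (Fin n)).card = 2 := Finset.card_pair hxy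
    have hz := hG S1 {x, y} hdisj hS1c hS2c
    set Rset := Finset.univ.filter fun i : Fin g =>
      (∀ j ∈ ({x, y} : Finset (Fin n)), G i j = true) ∧ ∀ j ∈ S1, G i j = false with hR
    set bad := Finset.univ.filter fun i : Fin g => ghat i ≠ gv i with hbad
    have hle : Rset.card ≤ (Rset \ bad).card + bad.card := Finset.card_le_card_sdiff_add_card
    have hne : (Rset \ bad).Nonempty := by
      rw [← Finset.card_pos]; omega
    obtain ⟨i, hi⟩ := hne
    obtain ⟨hiR, hib⟩ := Finset.mem_sdiff.mp hi
    obtain ⟨-, h2, h0⟩ := Finset.mem_filter.mp hiR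
    have hGx : G i x = true := h2 x (by simp)
    have hGy : G i y = true := h2 y (by simp)
    have hgvi : gv i = true := by
      rw [hgv]
      refine ⟨⟨y, hy, hGy⟩, fun j' hj' => h0 j' (hbS1 (Finset.mem_union_right _ hj'))⟩
    have hghat : ghat i = gv i := by
      by_contra hc
      exact hib (Finset.mem_filter.mpr ⟨Finset.mem_univ i, hc⟩)
    exact ⟨i, hGx, hGy, hghat.trans hgvi⟩
  · intro x hxH
    refine le_trans (Finset.card_le_card ?_) herr
    intro i hi
    simp only [Finset.mem_filter, Finset.mem_univ, true_and] at hi ⊢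
    intro heq
    have hgvi : gv i = true := heq ▸ hi.2
    have := ((hgv i).mp hgvi).2 x hxH
    rw [hi.1] at this
    exact Bool.noConfusion this
end

section
/- Let n = 2^k with k ≥ 1 and let S be the 2k × n signature matrix. For every fixed column index a, the map sending a column index b to the vector o ∈ {0,1}^{2k} defined by o_l = S(l, a)·(1 − S(l, b)) is injective; that is, if S(l, a)·(1 − S(l, b)) = S(l, a)·(1 − S(l, b')) for all l, then b = b'. Consequently, an inhibitor b is uniquely recoverable from a known defective a and the vector S_a masked by S_b. -/
/-- for every fixed column index `a` of the signature matrix, the map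
sending `b` to the vector `o` with `o_l = S(l, a) · (1 - S(l, b))` is injective; an
inhibitor `b` is uniquely recoverable from a known defective `a` and the vector `S_a`
masked by `S_b`. -/
theorem mask_injective (k : ℕ) (hk : 1 ≤ k) (a : Fin (2 ^ k)) :
    Function.Injective
      (fun b : Fin (2 ^ k) => fun l : Fin (2 * k) => sig k l a && !(sig k l b)) := by
  intro b b' h
  apply Fin.ext
  apply Nat.eq_of_testBit_eq
  intro i
  by_cases hi : i < k
  · rcases Bool.eq_false_or_eq_true ((a : ℕ).testBit i) with ha | ha
    · have hl := congrFun h ⟨i, by omega⟩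
      simp only [sig] at hl
      simp only [hi, if_true, ha, Bool.true_and] at hl
      exact Bool.not_inj hl
    · have hl := congrFun h ⟨i + k, by omega⟩
      simp only [sig] at hl
      have hnk : ¬ (i + k < k) := by omega
      simp only [hnk, if_false, Nat.add_sub_cancel, ha] at hl
      rw [Bool.not_false, Bool.true_and, Bool.true_and, Bool.not_not, Bool.not_not] at hl
      exact hl
  · push_neg at hi
    rw [Nat.testBit_eq_false_of_lt (lt_of_lt_of_le b.isLt (Nat.pow_le_pow_right (by norm_num) hi)),
        Nat.testBit_eq_false_of_lt (lt_of_lt_of_le b'.isLt (Nat.pow_le_pow_right (by norm_num) hi))]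
end

section
/- For every integer r ≥ 1 there exists a constant C > 0 such that for all integers n ≥ 2, d ≥ 1, z ≥ 1 with d + z ≤ n, letting w > 0 be the unique positive real with w·e^w = d·ln n, there exists a t × n binary (d, r; z]-disjunct matrix with t ≤ C·( r·d·ln(n)/w + z )^{r+1}. -/
open Finset Polynomial

theorem le_card_filter_forall_ne {ι κ α : Type*} [Fintype κ] [DecidableEq α]
    (f : ι → κ → α) {a z : ℕ}
    (hf : ∀ u v, u ≠ v → #{i | f u i = f v i} ≤ a) {S T : Finset ι} (hST : Disjoint S T)
    (hz : #S * #T * a + z ≤ Fintype.card κ) :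
    z ≤ #{i | ∀ u ∈ S, ∀ v ∈ T, f u i ≠ f v i} := by
  classical
  have hbad : #{i | ∃ u ∈ S, ∃ v ∈ T, f u i = f v i} ≤ #S * #T * a :=
    calc #{i | ∃ u ∈ S, ∃ v ∈ T, f u i = f v i}
        = #((S ×ˢ T).biUnion fun uv => {i | f uv.1 i = f uv.2 i}) := by
          congr 1; ext i; simp
      _ ≤ ∑ uv ∈ S ×ˢ T, #{i | f uv.1 i = f uv.2 i} := card_biUnion_le
      _ ≤ ∑ _uv ∈ S ×ˢ T, a := sum_le_sum fun uv huv => hf _ _ fun h =>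
          disjoint_left.1 hST (mem_product.1 huv).1 (h ▸ (mem_product.1 huv).2)
      _ = #S * #T * a := by rw [sum_const, card_product, smul_eq_mul]
  have hsplit := card_filter_add_card_filter_not (s := univ)
    fun i => ∃ u ∈ S, ∃ v ∈ T, f u i = f v i
  simp only [not_exists, not_and, ← ne_eq, card_univ] at hsplit
  omega

theorem card_filter_eval_eq_lt {R ι : Type*} [CommRing R] [IsDomain R] [DecidableEq R]
    [Fintype ι] {k : ℕ} {v : ι → R} (hv : Function.Injective v) {f g : R[X]}
    (hf : f ∈ degreeLT R k) (hg : g ∈ degreeLT R k) (hfg : f ≠ g) :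
    #{i | f.eval (v i) = g.eval (v i)} < k := by
  by_contra! h
  refine hfg (eq_of_degree_sub_lt_of_eval_index_eq {i | f.eval (v i) = g.eval (v i)} hv.injOn ?_
    fun i hi => (mem_filter.1 hi).2)
  exact (mem_degreeLT.1 ((degreeLT R k).sub_mem hf hg)).trans_le (by exact_mod_cast h)

theorem exists_reedSolomon_code {F : Type*} [Field F] [Fintype F] [DecidableEq F] {n L k : ℕ}
    (hL : L ≤ Fintype.card F) (hn : n ≤ Fintype.card F ^ k) :
    ∃ f : Fin n → Fin L → F, ∀ u v, u ≠ v → #{i | f u i = f v i} < k := by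
  obtain ⟨x⟩ := Function.Embedding.nonempty_of_card_le (α := Fin L) (β := F) (by simpa)
  obtain ⟨c⟩ :=
    Function.Embedding.nonempty_of_card_le (α := Fin n) (β := Fin k → F) (by simpa)
  let P : Fin n → degreeLT F k := fun u => (degreeLTEquiv F k).symm (c u)
  refine ⟨fun u i => (P u : F[X]).eval (x i), fun u v huv => ?_⟩
  exact card_filter_eval_eq_lt x.injective (P u).2 (P v).2 fun h =>
    huv (c.injective ((degreeLTEquiv F k).symm.injective (Subtype.ext h)))

section CodeMatrix

variable {α : Type*} [Fintype α] [DecidableEq α] {n L : ℕ}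

noncomputable def codeMatrix (r : ℕ) (f : Fin n → Fin L → α) :
    Fin (L * Fintype.card α ^ r) → Fin n → Bool :=
  fun t c => decide (∃ m, f c (rowEquiv.symm t).1 = (rowEquiv.symm t).2 m)
where
  rowEquiv : Fin L × (Fin r → α) ≃ Fin (L * Fintype.card α ^ r) :=
    Fintype.equivFinOfCardEq (by simp)

theorem disjunct_codeMatrix {d r z a : ℕ} (f : Fin n → Fin L → α)
    (hf : ∀ u v, u ≠ v → #{i | f u i = f v i} ≤ a) (hL : d * r * a + z ≤ L) :
    Disjunct _ n d r z (codeMatrix r f) := by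
  intro S1 S2 hS hS1 hS2
  have hgood := le_card_filter_forall_ne f hf hS (z := z) (by simpa [hS1, hS2] using hL)
  let o := S2.orderIsoOfFin hS2
  refine hgood.trans (card_le_card_of_injOn
    (fun i => codeMatrix.rowEquiv r (i, fun m => f (o m) i)) (fun i hi => ?_) fun i _ j _ h => ?_)
  · simp only [coe_filter, mem_univ, true_and, Set.mem_ofPred_eq] at hi
    simp only [coe_filter, mem_univ, true_and, Set.mem_ofPred_eq, codeMatrix,
      Equiv.symm_apply_apply, decide_eq_true_eq, decide_eq_false_iff_not, not_exists]
    exact ⟨fun c hc => ⟨o.symm ⟨c, hc⟩, by simp⟩, fun c hc m => hi c hc _ (o m).2⟩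
  · exact congrArg Prod.fst ((codeMatrix.rowEquiv r).injective h)

end CodeMatrix

theorem exists_disjunct_of_prime {n d r z k L p : ℕ} (hp : p.Prime) (hLp : L ≤ p)
    (hn : n ≤ p ^ k) (hL : d * r * (k - 1) + z ≤ L) :
    ∃ M : Fin (L * p ^ r) → Fin n → Bool, Disjunct (L * p ^ r) n d r z M := by
  have : Fact p.Prime := ⟨hp⟩
  rw [← ZMod.card p] at hLp hn ⊢
  obtain ⟨f, hf⟩ := exists_reedSolomon_code hLp hn
  exact ⟨_, disjunct_codeMatrix f (fun u v h => Nat.le_sub_one_of_lt (hf u v h)) hL⟩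

open Real

theorem le_exp_div_pow_ceil {x r w : ℝ} (hx : 0 < x) (hr : 0 < r) (hw : 0 < w) :
    x ≤ exp (w / r) ^ ⌈r * log x / w⌉₊ := by
  rw [← exp_nat_mul, ← log_le_iff_le_exp hx]
  calc log x = r * log x / w * (w / r) := by field_simp
    _ ≤ ⌈r * log x / w⌉₊ * (w / r) := by gcongr; exact Nat.le_ceil _

theorem exists_prime_parameters {r n d z : ℕ} (hr : 1 ≤ r) (hn : 2 ≤ n) (hz : 1 ≤ z)
    {w : ℝ} (hw : 0 < w) (hwe : w * exp w = d * log n) :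
    ∃ k L p : ℕ, p.Prime ∧ L ≤ p ∧ n ≤ p ^ k ∧ d * r * (k - 1) + z ≤ L ∧
      (L : ℝ) ≤ 2 * r * (r * d * log n / w + z) ∧
      (p : ℝ) ≤ 2 * r * (r * d * log n / w + z) := by
  set X := r * d * log n / w
  set k := ⌈r * log n / w⌉₊
  set L := d * r * (k - 1) + z
  have hr' : (1 : ℝ) ≤ r := by exact_mod_cast hr
  have hz' : (1 : ℝ) ≤ z := by exact_mod_cast hz
  have hlog : 0 < log n := log_pos (by exact_mod_cast hn)
  have hk : 0 < k := Nat.ceil_pos.2 (by positivity)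
  have hkX : ((k - 1 : ℕ) : ℝ) ≤ r * log n / w := by
    rw [Nat.cast_pred hk]
    linarith [Nat.ceil_lt_add_one (R := ℝ) (a := r * log n / w) (by positivity)]
  have hLX : (L : ℝ) ≤ r * (X + z) := by
    have hdrk : (d * r : ℝ) * (k - 1 : ℕ) ≤ d * r * (r * log n / w) := by gcongr
    have hX : (d * r : ℝ) * (r * log n / w) = r * X := by ring
    push_cast [L]
    nlinarith
  have hEX : (⌈exp (w / r)⌉₊ : ℝ) ≤ r * (X + z) := by
    have hwr : exp (w / r) ≤ exp w := exp_le_exp.2 (div_le_self hw.le hr')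
    have hXw : exp w ≤ X := by
      rw [le_div_iff₀ hw, mul_comm, hwe]
      nlinarith [mul_nonneg (Nat.cast_nonneg (α := ℝ) d) hlog.le]
    have hceil := Nat.ceil_lt_add_one (exp_pos (w / r)).le
    nlinarith
  obtain ⟨p, hp, hmp, hp2m⟩ :=
    Nat.exists_prime_lt_and_le_two_mul (max L ⌈exp (w / r)⌉₊) (by positivity)
  have hEp : exp (w / r) ≤ p :=
    (Nat.le_ceil _).trans (by exact_mod_cast (le_max_right _ _).trans hmp.le)
  refine ⟨k, L, p, hp, (le_max_left _ _).trans hmp.le, ?_, le_rfl, by nlinarith, ?_⟩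
  · exact_mod_cast (le_exp_div_pow_ceil (by positivity) (by positivity) hw).trans
      (pow_le_pow_left₀ (exp_pos _).le hEp k)
  · have : (p : ℝ) ≤ 2 * max L ⌈exp (w / r)⌉₊ := by exact_mod_cast hp2m
    rw [Nat.cast_max] at this
    linarith [max_le hLX hEX]

/-- for every `r ≥ 1` there is a constant `C > 0` such that for all
`n ≥ 2`, `d ≥ 1`, `z ≥ 1` with `d + z ≤ n`, letting `w` be the Lambert-W value with
`w·e^w = d·ln n`, there is a `t × n` binary `(d, r; z]`-disjunct matrix with
`t ≤ C·(r·d·ln(n)/w + z)^{r+1}`. -/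
theorem improved_disjunct_exists (r : ℕ) (hr : 1 ≤ r) :
    ∃ C : ℝ, 0 < C ∧ ∀ n d z : ℕ, 2 ≤ n → 1 ≤ d → 1 ≤ z → d + z ≤ n →
      ∀ w : ℝ, 0 < w → w * Real.exp w = d * Real.log n →
        ∃ t : ℕ, ∃ M : Fin t → Fin n → Bool, Disjunct t n d r z M ∧
          (t : ℝ) ≤ C * (r * d * Real.log n / w + z) ^ (r + 1) := by
  refine ⟨(2 * r) ^ (r + 1), by positivity, fun n d z hn _ hz _ w hw hwe => ?_⟩
  obtain ⟨k, L, p, hp, hLp, hnp, hkL, hL, hpB⟩ := exists_prime_parameters hr hn hz hw hwe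
  obtain ⟨M, hM⟩ := exists_disjunct_of_prime hp hLp hnp hkL
  refine ⟨_, M, hM, ?_⟩
  calc ((L * p ^ r : ℕ) : ℝ) = L * p ^ r := by rw [Nat.cast_mul, Nat.cast_pow]
    _ ≤ (2 * r * (r * d * log n / w + z)) * (2 * r * (r * d * log n / w + z)) ^ r := by
        gcongr
    _ = (2 * r) ^ (r + 1) * (r * d * log n / w + z) ^ (r + 1) := by
        rw [← pow_succ', mul_pow]
end

section
/- Let n ≥ 2, d ≥ 1, r ≥ 1, z ≥ 1 be integers, and let w > 0 be a real number with w·e^w = d·ln n. Then for all real numbers q and k1 with q ≥ r·d·ln(n)/w + z + 1 and k1 ≥ ln(n)/w, one has q^{k1} ≥ n. -/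
/-- with `w > 0` satisfying `w·e^w = d·ln n`, for all reals
`q ≥ r·d·ln(n)/w + z + 1` and `k1 ≥ ln(n)/w` one has `q^{k1} ≥ n`. -/
theorem rs_code_size_bound (n d r z : ℕ) (hn : 2 ≤ n) (hd : 1 ≤ d) (hr : 1 ≤ r)
    (hz : 1 ≤ z) (w : ℝ) (hw : 0 < w) (hwe : w * Real.exp w = d * Real.log n) :
    ∀ q k1 : ℝ, r * d * Real.log n / w + z + 1 ≤ q → Real.log n / w ≤ k1 →
      (n : ℝ) ≤ q ^ k1 := by
  intro q k1 hq hk1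
  have hn1 : (1:ℝ) < n := by exact_mod_cast lt_of_lt_of_le one_lt_two (by exact_mod_cast hn)
  have hlogn : 0 < Real.log n := Real.log_pos hn1
  have hexp : Real.exp w = d * Real.log n / w := by
    rw [eq_div_iff hw.ne']; linarith [hwe]
  have hdr : d * Real.log n / w ≤ r * d * Real.log n / w := by
    have h1r : (1:ℝ) ≤ r := by exact_mod_cast hr
    gcongr
    nlinarith [hlogn.le, (show (0:ℝ) ≤ d by positivity)]
  have hz1 : (0:ℝ) ≤ (z:ℝ) + 1 := by positivity
  have hqe : Real.exp w ≤ q := by rw [hexp]; linarith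
  have hk0 : 0 ≤ k1 := le_trans (by positivity) hk1
  have h1 : Real.exp w ^ k1 ≤ q ^ k1 :=
    Real.rpow_le_rpow (Real.exp_pos w).le hqe hk0
  have h2 : Real.exp w ^ k1 = Real.exp (w * k1) := by
    rw [Real.rpow_def_of_pos (Real.exp_pos w), Real.log_exp]
  have h3 : Real.log n ≤ w * k1 := by
    rw [div_le_iff₀ hw] at hk1; linarith [hk1]
  calc (n:ℝ) = Real.exp (Real.log n) := (Real.exp_log (by positivity)).symm
    _ ≤ Real.exp (w * k1) := Real.exp_le_exp.mpr h3
    _ = Real.exp w ^ k1 := h2.symm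
    _ ≤ q ^ k1 := h1
end

section
/- For every real number x ≥ e and every real w > 0 with w·e^w = x, one has ln(x) − ln(ln(x)) ≤ w ≤ ln(x) − (1/2)·ln(ln(x)). -/
/-- for `x ≥ e` and `w = W(x) > 0` with `w·e^w = x`, one has
`ln x − ln ln x ≤ w ≤ ln x − (1/2)·ln ln x`. -/
theorem lambertW_bounds (x w : ℝ) (hx : Real.exp 1 ≤ x) (hw : 0 < w)
    (hwe : w * Real.exp w = x) :
    Real.log x - Real.log (Real.log x) ≤ w ∧
      w ≤ Real.log x - (1 / 2) * Real.log (Real.log x) := by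
  have hL : Real.log x = Real.log w + w := by
    rw [← hwe, Real.log_mul (ne_of_gt hw) (Real.exp_ne_zero w), Real.log_exp]
  have hw1 : 1 ≤ w := by
    by_contra h
    push_neg at h
    have : w * Real.exp w < 1 * Real.exp 1 :=
      mul_lt_mul h (le_of_lt (Real.exp_lt_exp.mpr h)) (Real.exp_pos w) zero_le_one
    rw [hwe, one_mul] at this
    exact absurd hx (not_le.mpr this)
  have hlogw : 0 ≤ Real.log w := Real.log_nonneg hw1
  have hwleL : w ≤ Real.log x := by linarith
  have hLpos : 0 < Real.log x := lt_of_lt_of_le hw hwleL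
  -- lower bound
  have hlogwle : Real.log w ≤ Real.log (Real.log x) :=
    Real.log_le_log hw hwleL
  -- upper bound: log x ≤ w^2
  have hlw : Real.log w ≤ w - 1 := Real.log_le_sub_one_of_pos hw
  have hLw2 : Real.log x ≤ w ^ 2 := by nlinarith
  have h2 : Real.log (Real.log x) ≤ 2 * Real.log w := by
    calc Real.log (Real.log x) ≤ Real.log (w ^ 2) := Real.log_le_log hLpos hLw2
    _ = 2 * Real.log w := by rw [Real.log_pow]; push_cast; ring
  constructor <;> linarith
end
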